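/- For any string e = e₁e₂…e_l over {f, g, h} with flip e' = ē_l ē_{l−1} … ē₁ (where f̄ = g, ḡ = f, h̄ = h), and for o ∈ {g, h}, one has Q_o⁻¹·A_e·A_o·Q_o⁻¹·A_{e'}·A_o = (−1)^{k+1}·I, where k is the number of occurrences of h in e, A_e denotes the product A_{e₁}A_{e₂}⋯A_{e_l}, A_f = [[1,0],[2,1]], A_g = [[0,1],[−1,2]], A_h = [[0,1],[1,2]], Q_g = (1/√2)·[[1,−1],[1,1]], Q_h = (1/√2)·[[1,1],[1,−1]]. -/
import Mathlib


/-- The matrices associated with the characters `f`, `g`, `h` (indexed `0`, `1`, `2`). -/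
def AchR : Fin 3 → Matrix (Fin 2) (Fin 2) ℝ :=
  ![!![1, 0; 2, 1], !![0, 1; -1, 2], !![0, 1; 1, 2]]

noncomputable def Qg : Matrix (Fin 2) (Fin 2) ℝ := (Real.sqrt 2)⁻¹ • !![1, -1; 1, 1]
noncomputable def Qh : Matrix (Fin 2) (Fin 2) ℝ := (Real.sqrt 2)⁻¹ • !![1, 1; 1, -1]

/-- `A_e`, the ordered product of the matrices of the characters of `e`. -/
def Aprod (e : List (Fin 3)) : Matrix (Fin 2) (Fin 2) ℝ := (e.map AchR).prod

/-- Swap `f` and `g`, fix `h`. -/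
def flipChar : Fin 3 → Fin 3 := ![1, 0, 2]

/-- The flip of a string: reverse it and flip each character. -/
def flipStr (e : List (Fin 3)) : List (Fin 3) := (e.reverse).map flipChar

/-- explicit inverses of the `AchR` matrices -/
def Binv : Fin 3 → Matrix (Fin 2) (Fin 2) ℝ :=
  ![!![1, 0; -2, 1], !![2, -1; 1, 0], !![-2, 1; 1, 0]]

lemma AchR_Binv (c : Fin 3) : AchR c * Binv c = 1 := by
  fin_cases c <;>
    · ext i j
      fin_cases i <;> fin_cases j <;>
        simp [AchR, Binv, Matrix.mul_apply, Fin.sum_univ_succ] <;> norm_num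

lemma sqrt2_inv_sq : (Real.sqrt 2)⁻¹ * (Real.sqrt 2)⁻¹ = 2⁻¹ := by
  rw [← mul_inv]
  norm_num [Real.mul_self_sqrt]

lemma Qg_inv : Qg⁻¹ = (Real.sqrt 2)⁻¹ • !![1, 1; -1, 1] := by
  apply Matrix.inv_eq_right_inv
  rw [Qg, Matrix.smul_mul, Matrix.mul_smul, smul_smul, sqrt2_inv_sq]
  ext i j
  fin_cases i <;> fin_cases j <;>
    simp [Matrix.mul_apply, Fin.sum_univ_succ, Matrix.one_apply] <;> norm_num

lemma Qh_inv : Qh⁻¹ = (Real.sqrt 2)⁻¹ • !![1, 1; 1, -1] := by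
  apply Matrix.inv_eq_right_inv
  rw [Qh, Matrix.smul_mul, Matrix.mul_smul, smul_smul, sqrt2_inv_sq]
  ext i j
  fin_cases i <;> fin_cases j <;>
    simp [Matrix.mul_apply, Fin.sum_univ_succ, Matrix.one_apply] <;> norm_num

/-- reversed product of explicit inverses -/
def Cinv (e : List (Fin 3)) : Matrix (Fin 2) (Fin 2) ℝ := ((e.map Binv).reverse).prod

lemma Cinv_cons (c : Fin 3) (e : List (Fin 3)) : Cinv (c :: e) = Cinv e * Binv c := by
  simp [Cinv]

lemma Aprod_cons (c : Fin 3) (e : List (Fin 3)) : Aprod (c :: e) = AchR c * Aprod e := by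
  simp [Aprod]

lemma Aprod_Cinv (e : List (Fin 3)) : Aprod e * Cinv e = 1 := by
  induction e with
  | nil => simp [Aprod, Cinv]
  | cons c e ih =>
    rw [Aprod_cons, Cinv_cons, mul_assoc, ← mul_assoc (Aprod e), ih, one_mul, AchR_Binv]

lemma flipStr_cons (c : Fin 3) (e : List (Fin 3)) :
    flipStr (c :: e) = flipStr e ++ [flipChar c] := by
  simp [flipStr]

lemma key (e : List (Fin 3)) (T : Matrix (Fin 2) (Fin 2) ℝ)
    (hT : ∀ c : Fin 3, T * AchR (flipChar c) = (if c = 2 then (-1 : ℝ) else 1) • (Binv c * T)) :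
    T * Aprod (flipStr e) = ((-1 : ℝ) ^ (e.count 2)) • (Cinv e * T) := by
  induction e with
  | nil => simp [flipStr, Aprod, Cinv]
  | cons c e ih =>
    have h1 : Aprod (flipStr (c :: e)) = Aprod (flipStr e) * AchR (flipChar c) := by
      rw [flipStr_cons]
      simp [Aprod]
    rw [h1, ← mul_assoc, ih, Matrix.smul_mul, mul_assoc, hT c, Cinv_cons,
      List.count_cons]
    by_cases hc : c = 2
    · subst hc
      simp only [beq_self_eq_true, if_true, Matrix.mul_smul, smul_smul, pow_succ, mul_assoc]
    · simp [hc, mul_assoc]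

theorem flip_matrix_identity (e : List (Fin 3)) (A Q : Matrix (Fin 2) (Fin 2) ℝ)
    (h : (A = AchR 1 ∧ Q = Qg) ∨ (A = AchR 2 ∧ Q = Qh)) :
    Q⁻¹ * Aprod e * A * Q⁻¹ * Aprod (flipStr e) * A =
      ((-1 : ℝ) ^ (e.count 2 + 1)) • (1 : Matrix (Fin 2) (Fin 2) ℝ) := by
  have hT : ∀ c : Fin 3, (A * Q⁻¹) * AchR (flipChar c)
      = (if c = 2 then (-1 : ℝ) else 1) • (Binv c * (A * Q⁻¹)) := by
    intro c
    rcases h with ⟨hA, hQ⟩ | ⟨hA, hQ⟩ <;> subst hA hQ <;>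
      [rw [Qg_inv]; rw [Qh_inv]] <;>
      fin_cases c <;>
      · ext i j
        fin_cases i <;> fin_cases j <;>
          simp [AchR, Binv, flipChar, Matrix.mul_apply, Fin.sum_univ_succ] <;> ring
  have hbase : Q⁻¹ * A * Q⁻¹ * A = (-1 : ℝ) • (1 : Matrix (Fin 2) (Fin 2) ℝ) := by
    rcases h with ⟨hA, hQ⟩ | ⟨hA, hQ⟩ <;> subst hA hQ <;>
      [rw [Qg_inv]; rw [Qh_inv]] <;>
      · ext i j
        fin_cases i <;> fin_cases j <;>
          · simp [AchR, Matrix.mul_apply, Fin.sum_univ_succ, Matrix.one_apply]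
            nlinarith [sqrt2_inv_sq]
  have hk := key e (A * Q⁻¹) hT
  calc Q⁻¹ * Aprod e * A * Q⁻¹ * Aprod (flipStr e) * A
      = Q⁻¹ * Aprod e * ((A * Q⁻¹) * Aprod (flipStr e)) * A := by
        simp only [mul_assoc]
    _ = Q⁻¹ * Aprod e * (((-1 : ℝ) ^ (e.count 2)) • (Cinv e * (A * Q⁻¹))) * A := by
        rw [hk]
    _ = ((-1 : ℝ) ^ (e.count 2)) • (Q⁻¹ * (Aprod e * Cinv e) * (A * Q⁻¹) * A) := by
        simp only [Matrix.mul_smul, Matrix.smul_mul, mul_assoc]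
    _ = ((-1 : ℝ) ^ (e.count 2)) • (Q⁻¹ * A * Q⁻¹ * A) := by
        rw [Aprod_Cinv]
        simp only [mul_one, one_mul, mul_assoc]
    _ = ((-1 : ℝ) ^ (e.count 2 + 1)) • (1 : Matrix (Fin 2) (Fin 2) ℝ) := by
        rw [hbase, smul_smul, pow_succ]
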